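/- For cosets x, y ∈ S_N/(S_K × S_{N−K}) with associated lattice paths α, β (under the standard bijection with the ε = − convention), x ≤ y in the induced Bruhat order if and only if the path α lies weakly below the path β; moreover the length |x| of the coset equals the number of unit boxes between α and the minimal path. -/

import Mathlib

/-- The adjacent transposition swapping positions `j` and `j+1` (0-indexed) in `S_N`. -/
def sgen (N : ℕ) (j : ℕ) (h : j + 1 < N) : Equiv.Perm (Fin N) :=
  Equiv.swap ⟨j, Nat.lt_of_succ_lt h⟩ ⟨j + 1, h⟩

/-- The Young subgroup `S_K × S_{N-K}` of `S_N`. -/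
def young (N K : ℕ) : Subgroup (Equiv.Perm (Fin N)) :=
  Subgroup.closure {σ | ∃ (j : ℕ) (h : j + 1 < N), j + 1 ≠ K ∧ σ = sgen N j h}

/-- The length (number of inversions) of a permutation. -/
def len {N : ℕ} (σ : Equiv.Perm (Fin N)) : ℕ :=
  (Finset.univ.filter (fun p : Fin N × Fin N => p.1 < p.2 ∧ σ p.2 < σ p.1)).card

/-- Bruhat covering (as in the paper): multiply on the left or right by a simple
transposition, increasing length by one. -/
def bcov (N : ℕ) (v w : Equiv.Perm (Fin N)) : Prop :=
  (∃ (j : ℕ) (h : j + 1 < N), w = sgen N j h * v ∨ w = v * sgen N j h) ∧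
    len w = len v + 1

/-- Bruhat order on `S_N`. -/
def bruhatLE (N : ℕ) : Equiv.Perm (Fin N) → Equiv.Perm (Fin N) → Prop :=
  Relation.ReflTransGen (bcov N)

/-- The induced order on cosets: `x ≤ y` iff some representatives are comparable. -/
def cosetLE (N K : ℕ) (x y : Equiv.Perm (Fin N) ⧸ young N K) : Prop :=
  ∃ v w : Equiv.Perm (Fin N),
    (QuotientGroup.mk v : Equiv.Perm (Fin N) ⧸ young N K) = x ∧
    (QuotientGroup.mk w : Equiv.Perm (Fin N) ⧸ young N K) = y ∧ bruhatLE N v w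

/-- The length of a coset: minimal length of a representative. -/
noncomputable def clen (N K : ℕ) (x : Equiv.Perm (Fin N) ⧸ young N K) : ℕ :=
  sInf {n | ∃ v : Equiv.Perm (Fin N),
    (QuotientGroup.mk v : Equiv.Perm (Fin N) ⧸ young N K) = x ∧ len v = n}

/-- The base binary string `(1,…,1,2,…,2)` (`true` = 1, `false` = 2). -/
def base (N K : ℕ) : Fin N → Bool := fun i => decide ((i : ℕ) < K)

/-- Height at abscissa `x` of the lattice path of a binary string, in the ε = −
convention: entries `1` (`true`) give steps `(1,-1)` and entries `2` (`false`) give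
steps `(1,+1)`. -/
def hgtm {N : ℕ} (v : Fin N → Bool) (x : ℤ) : ℤ :=
  ∑ i ∈ Finset.univ.filter (fun i : Fin N => (i : ℤ) < x),
    (if v i then (-1 : ℤ) else 1)

/-
A coset `v (S_K × S_{N-K})` is determined by the set `T = v {0, …, K-1}` of positions of the
entries `1` of its string, since the Young subgroup is the stabiliser of `{0, …, K-1}`; the
height of its path at `n` is `n - 2 #(T ∩ [0, n))`. A Bruhat cover `v ⋖ w` is `w = (a b) v`
for some `a < b` with `v⁻¹ a < v⁻¹ b`, so it can only move an entry `1` from `a` to the later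
position `b`, which never lowers the path. Conversely, where the path of `T` lies strictly
below a path `β` with the same endpoints, walking right along its down-steps and then left
along its up-steps finds a valley (entries `1, 2` at `j, j + 1`) strictly below `β`; flipping
it is a left Bruhat cover adding exactly one box. Iterating from the identity gives a
representative whose length is the number of boxes between its path and the minimal one, and
no representative is shorter because a left multiplication by a simple transposition changes
that number by at most one.
-/

open Finset Equiv
open scoped Pointwise

namespace BruhatCoset

variable {N K : ℕ}

lemma swap_eq_sgen {a b : Fin N} (hab : (a : ℕ) + 1 = b) :
    swap a b = sgen N a (hab ▸ b.isLt) := by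
  rw [sgen]
  congr
  exact Fin.ext hab.symm

lemma swap_lt_swap_iff {a b x y : Fin N} (hab : (a : ℕ) + 1 = b) :
    swap a b x < swap a b y ↔ (x < y ∧ ¬(x = a ∧ y = b)) ∨ (x = b ∧ y = a) := by
  simp only [swap_apply_def, Fin.lt_def, Fin.ext_iff]
  split_ifs <;> omega

lemma len_mul_swap {σ : Perm (Fin N)} {a b : Fin N} (hab : (a : ℕ) + 1 = b) (h : σ a < σ b) :
    len (σ * swap a b) = len σ + 1 := by
  have hba : ¬ b < a := by simp only [Fin.lt_def]; omega
  have key : (univ.filter fun p : Fin N × Fin N =>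
        p.1 < p.2 ∧ (σ * swap a b) p.2 < (σ * swap a b) p.1).map
          (prodCongr (swap a b) (swap a b)).toEmbedding =
      insert (b, a) (univ.filter fun p : Fin N × Fin N => p.1 < p.2 ∧ σ p.2 < σ p.1) := by
    ext ⟨x, y⟩
    rw [mem_map_equiv]
    simp only [mem_filter, mem_univ, true_and, mem_insert, Prod.mk.injEq]
    simp only [prodCongr_symm, symm_swap, prodCongr_apply, Prod.map_apply, Perm.mul_apply,
      swap_apply_self, swap_lt_swap_iff hab]
    constructor
    · rintro ⟨⟨hxy, -⟩ | ⟨rfl, rfl⟩, hσ⟩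
      · exact Or.inr ⟨hxy, hσ⟩
      · exact Or.inl ⟨rfl, rfl⟩
    · rintro (⟨rfl, rfl⟩ | ⟨hxy, hσ⟩)
      · exact ⟨Or.inr ⟨rfl, rfl⟩, h⟩
      · refine ⟨Or.inl ⟨hxy, ?_⟩, hσ⟩
        rintro ⟨rfl, rfl⟩
        exact absurd h (not_lt.mpr hσ.le)
  unfold len
  rw [← card_map, key, card_insert_of_notMem (by simp [hba])]

lemma len_inv (σ : Perm (Fin N)) : len σ⁻¹ = len σ := by
  unfold len
  refine card_nbij' (fun p => (σ⁻¹ p.2, σ⁻¹ p.1)) (fun p => (σ p.2, σ p.1))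
    ?_ ?_ ?_ ?_ <;> intro p hp <;> simp_all

lemma len_swap_mul {σ : Perm (Fin N)} {a b : Fin N} (hab : (a : ℕ) + 1 = b)
    (h : σ⁻¹ a < σ⁻¹ b) : len (swap a b * σ) = len σ + 1 := by
  rw [← len_inv, mul_inv_rev, swap_inv, len_mul_swap hab h, len_inv]

lemma len_mul_swap_of_gt {σ : Perm (Fin N)} {a b : Fin N} (hab : (a : ℕ) + 1 = b)
    (h : σ b < σ a) : len (σ * swap a b) + 1 = len σ := by
  simpa [mul_assoc] using (len_mul_swap (σ := σ * swap a b) hab (by simpa using h)).symm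

lemma len_swap_mul_of_gt {σ : Perm (Fin N)} {a b : Fin N} (hab : (a : ℕ) + 1 = b)
    (h : σ⁻¹ b < σ⁻¹ a) : len (swap a b * σ) + 1 = len σ := by
  rw [← len_inv, mul_inv_rev, swap_inv, len_mul_swap_of_gt hab h, len_inv]

lemma len_one : len (1 : Perm (Fin N)) = 0 := by
  rw [len, card_eq_zero, filter_eq_empty_iff]
  exact fun p _ h => lt_asymm h.1 h.2

lemma exists_descent {σ : Perm (Fin N)} (hσ : σ ≠ 1) :
    ∃ a b : Fin N, (a : ℕ) + 1 = b ∧ σ b < σ a := by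
  by_contra! hmono
  apply hσ
  obtain _ | n := N
  · exact Subsingleton.elim _ _
  have : StrictMono σ := Fin.strictMono_iff_lt_succ.mpr fun i =>
    (hmono _ _ rfl).lt_of_ne (σ.injective.ne (Fin.castSucc_lt_succ (i := i)).ne)
  exact Perm.ext fun i => congrFun this.eq_id i

def baseSet (N K : ℕ) : Finset (Fin N) := univ.filter fun i => (i : ℕ) < K

lemma mem_baseSet {i : Fin N} : i ∈ baseSet N K ↔ (i : ℕ) < K := by simp [baseSet]

lemma swap_smul_baseSet {a b : Fin N} (hab : (a : ℕ) + 1 = b) (hK : (b : ℕ) ≠ K) :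
    swap a b • baseSet N K = baseSet N K := by
  ext i
  rw [← inv_smul_mem_iff, swap_inv, Perm.smul_def, mem_baseSet, mem_baseSet, swap_apply_def]
  split_ifs <;> simp_all only [Fin.ext_iff] <;> omega

lemma young_le_stabilizer :
    young N K ≤ MulAction.stabilizer (Perm (Fin N)) (baseSet N K) := by
  rw [young, Subgroup.closure_le]
  rintro _ ⟨j, h, hK, rfl⟩
  exact swap_smul_baseSet (b := ⟨j + 1, h⟩) rfl hK

lemma young_eq_stabilizer :
    young N K = MulAction.stabilizer (Perm (Fin N)) (baseSet N K) := by
  refine le_antisymm young_le_stabilizer fun σ hσ => ?_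
  induction hlen : len σ using Nat.strong_induction_on generalizing σ with
  | _ n ih =>
  by_cases h1 : σ = 1
  · exact h1 ▸ one_mem _
  obtain ⟨a, b, hab, hdesc⟩ := exists_descent h1
  have hbK : (b : ℕ) ≠ K := by
    intro hbK
    have hpres : ∀ i, σ i ∈ baseSet N K ↔ i ∈ baseSet N K := fun i => by
      conv_lhs => rw [← MulAction.mem_stabilizer_iff.mp hσ]
      rw [← Perm.smul_def, smul_mem_smul_finset_iff]
    have ha := (hpres a).mpr (mem_baseSet.mpr (by omega))
    have hb := (hpres b).not.mpr (by simp [mem_baseSet]; omega)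
    simp only [mem_baseSet, Fin.lt_def] at ha hb hdesc
    omega
  have hs : swap a b ∈ young N K :=
    Subgroup.subset_closure ⟨a, hab ▸ b.isLt, by omega, swap_eq_sgen hab⟩
  have hσs : σ * swap a b ∈ young N K :=
    ih _ (by have := len_mul_swap_of_gt hab hdesc; omega) _
      (mul_mem hσ (young_le_stabilizer hs)) rfl
  simpa [mul_assoc] using mul_mem hσs hs

/-- The positions of the entries `1` in the binary string of the coset of `v`. -/
def ones (K : ℕ) (v : Perm (Fin N)) : Finset (Fin N) := v • baseSet N K

lemma mem_ones {v : Perm (Fin N)} {i : Fin N} : i ∈ ones K v ↔ (v⁻¹ i : ℕ) < K := by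
  rw [ones, ← inv_smul_mem_iff, Perm.smul_def, mem_baseSet]

lemma ones_mul (σ v : Perm (Fin N)) : ones K (σ * v) = σ • ones K v := mul_smul _ _ _

lemma ones_one : ones K (1 : Perm (Fin N)) = baseSet N K := one_smul _ _

lemma card_ones (v : Perm (Fin N)) : #(ones K v) = #(baseSet N K) := card_smul_finset _ _

lemma mk_eq_mk_iff {v w : Perm (Fin N)} :
    (QuotientGroup.mk v : Perm (Fin N) ⧸ young N K) = QuotientGroup.mk w ↔
      ones K v = ones K w := by
  rw [QuotientGroup.eq, young_eq_stabilizer, MulAction.mem_stabilizer_iff, mul_smul,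
    inv_smul_eq_iff, ones, ones, eq_comm]

def countLT (T : Finset (Fin N)) (n : ℕ) : ℕ := #(T.filter fun i : Fin N => (i : ℕ) < n)

lemma countLT_zero (T : Finset (Fin N)) : countLT T 0 = 0 := by simp [countLT]

lemma countLT_of_le (T : Finset (Fin N)) {n : ℕ} (hn : N ≤ n) : countLT T n = #T := by
  rw [countLT, filter_true_of_mem fun i _ => i.isLt.trans_le hn]

lemma countLT_succ (T : Finset (Fin N)) (i : Fin N) :
    countLT T (i + 1) = countLT T i + if i ∈ T then 1 else 0 := by
  have hsplit : T.filter (fun j : Fin N => (j : ℕ) < i + 1) =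
      T.filter (fun j : Fin N => (j : ℕ) < i) ∪ T.filter (· = i) := by
    rw [← filter_or]
    congr! 2 with j
    rw [Fin.ext_iff]
    omega
  rw [countLT, hsplit, card_union_of_disjoint (disjoint_filter.mpr fun j _ h h' => by
    rw [h'] at h; exact lt_irrefl _ h), filter_eq']
  split_ifs <;> rfl

lemma eq_of_countLT_eq {T T' : Finset (Fin N)} (h : ∀ n, countLT T n = countLT T' n) :
    T = T' := by
  ext i
  have hT := countLT_succ T i
  have hT' := countLT_succ T' i
  rw [h, h] at hT
  split_ifs at hT hT' <;> simp_all

lemma swap_smul_of_mem_iff {T : Finset (Fin N)} {a b : Fin N} (h : a ∈ T ↔ b ∈ T) :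
    swap a b • T = T := by
  ext i
  rw [← inv_smul_mem_iff, swap_inv, Perm.smul_def, swap_apply_def]
  split_ifs <;> simp_all

lemma swap_smul_of_mem_of_notMem {T : Finset (Fin N)} {a b : Fin N} (ha : a ∈ T)
    (hb : b ∉ T) : swap a b • T = insert b (T.erase a) := by
  ext i
  rw [← inv_smul_mem_iff, swap_inv, Perm.smul_def, swap_apply_def]
  split_ifs <;> aesop

lemma countLT_swap_smul {T : Finset (Fin N)} {a b : Fin N} (ha : a ∈ T) (hb : b ∉ T)
    (hab : a < b) (n : ℕ) :
    (countLT (swap a b • T) n : ℤ) =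
      countLT T n - if (a : ℕ) < n ∧ n ≤ b then 1 else 0 := by
  rw [swap_smul_of_mem_of_notMem ha hb, countLT, countLT, filter_insert, filter_erase]
  have hb' : b ∉ (T.filter fun i : Fin N => (i : ℕ) < n).erase a :=
    fun h => hb (mem_filter.mp (mem_of_mem_erase h)).1
  rw [Fin.lt_def] at hab
  split_ifs with hbn han han
  · exact absurd han.2 (not_le.mpr hbn)
  · rw [card_insert_of_notMem hb', card_erase_add_one (mem_filter.mpr ⟨ha, by omega⟩)]
    ring
  · have ha' : a ∈ T.filter fun i : Fin N => (i : ℕ) < n := mem_filter.mpr ⟨ha, han.1⟩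
    rw [card_erase_of_mem ha', Nat.cast_sub (card_pos.mpr ⟨a, ha'⟩)]
    push_cast
    ring
  · rw [erase_eq_of_notMem (fun h => by simp at h; omega)]
    ring

/-- The path of the string with entries `1` at `T` lies weakly below that of `T'`: the height
of the former at `n` is `n - 2 * countLT T n`. -/
def PathLE (T T' : Finset (Fin N)) : Prop := ∀ n, countLT T' n ≤ countLT T n

lemma pathLE_swap_smul {T : Finset (Fin N)} {a b : Fin N} (hab : a < b) (h : b ∈ T → a ∈ T) :
    PathLE T (swap a b • T) := by
  by_cases hmem : a ∈ T ∧ b ∉ T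
  · intro n
    have := countLT_swap_smul hmem.1 hmem.2 hab n
    split_ifs at this <;> omega
  · rw [swap_smul_of_mem_iff (by tauto)]
    exact fun _ => le_rfl

def countSum (T : Finset (Fin N)) : ℤ := ∑ n ∈ range (N + 1), (countLT T n : ℤ)

lemma countSum_le_of_pathLE {T T' : Finset (Fin N)} (h : PathLE T T') :
    countSum T' ≤ countSum T :=
  sum_le_sum fun n _ => by exact_mod_cast h n

lemma countSum_swap_smul {T : Finset (Fin N)} {a b : Fin N} (hab : (a : ℕ) + 1 = b)
    (ha : a ∈ T) (hb : b ∉ T) : countSum (swap a b • T) = countSum T - 1 := by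
  have hb' : (b : ℕ) ∈ range (N + 1) := mem_range.mpr (by omega)
  simp only [countSum, countLT_swap_smul ha hb (Fin.lt_def.mpr (by omega)), sum_sub_distrib]
  rw [sum_congr rfl fun n _ =>
      if_congr (show (a : ℕ) < n ∧ n ≤ b ↔ (b : ℕ) = n by omega) rfl rfl,
    sum_ite_eq, if_pos hb']

lemma countSum_le_swap_smul (T : Finset (Fin N)) {a b : Fin N} (hab : (a : ℕ) + 1 = b) :
    countSum T ≤ countSum (swap a b • T) + 1 := by
  by_cases h : a ∈ T ↔ b ∈ T
  · rw [swap_smul_of_mem_iff h]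
    omega
  by_cases ha : a ∈ T
  · rw [countSum_swap_smul hab ha (by tauto)]
    omega
  · have key := countSum_swap_smul (T := swap a b • T) hab
      (by rw [← inv_smul_mem_iff, swap_inv, Perm.smul_def, swap_apply_left]; tauto)
      (by rw [← inv_smul_mem_iff, swap_inv, Perm.smul_def, swap_apply_right]; tauto)
    rw [← mul_smul, swap_mul_self, one_smul] at key
    omega

lemma exists_countLT_lt {T T' : Finset (Fin N)} (h : PathLE T T') (hne : T ≠ T') :
    ∃ n, countLT T' n < countLT T n := by
  by_contra! h'
  exact hne (eq_of_countLT_eq fun n => le_antisymm (h' n) (h n))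

lemma exists_notMem_countLT_lt {T T' : Finset (Fin N)} (hcard : #T = #T') {n : ℕ}
    (hn : countLT T' n < countLT T n) :
    ∃ b : Fin N, b ∉ T ∧ countLT T' b < countLT T b := by
  have hnN : n < N := by
    by_contra! hN
    rw [countLT_of_le T hN, countLT_of_le T' hN, hcard] at hn
    exact lt_irrefl _ hn
  by_cases hT : (⟨n, hnN⟩ : Fin N) ∈ T
  · have hs := countLT_succ T ⟨n, hnN⟩
    have hs' := countLT_succ T' ⟨n, hnN⟩
    rw [if_pos hT] at hs
    exact exists_notMem_countLT_lt hcard (n := n + 1) (by split_ifs at hs' <;> simp_all; omega)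
  · exact ⟨_, hT, hn⟩
termination_by N - n

lemma exists_valley {T T' : Finset (Fin N)} {b : Fin N} (hb : b ∉ T)
    (hlt : countLT T' b < countLT T b) :
    ∃ a c : Fin N, (a : ℕ) + 1 = c ∧ a ∈ T ∧ c ∉ T ∧ countLT T' c < countLT T c := by
  obtain ⟨k, hk⟩ : ∃ k, (b : ℕ) = k + 1 := by
    refine Nat.exists_eq_add_one.mpr (Nat.pos_of_ne_zero fun h0 => ?_)
    simp [h0, countLT_zero] at hlt
  set a : Fin N := ⟨k, by omega⟩
  by_cases ha : a ∈ T
  · exact ⟨a, b, hk.symm, ha, hb, hlt⟩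
  · have hs := countLT_succ T a
    have hs' := countLT_succ T' a
    rw [if_neg ha, show (a : ℕ) + 1 = b from hk.symm] at hs
    rw [show (a : ℕ) + 1 = b from hk.symm] at hs'
    exact exists_valley ha (by split_ifs at hs' <;> omega)
termination_by (b : ℕ)
decreasing_by omega

lemma bcov_exists_swap {v w : Perm (Fin N)} (h : bcov N v w) :
    ∃ a b : Fin N, a < b ∧ v⁻¹ a < v⁻¹ b ∧ w = swap a b * v := by
  obtain ⟨⟨j, hj, rfl | rfl⟩, hlen⟩ := h
  all_goals
    unfold sgen at hlen ⊢
    set a : Fin N := ⟨j, by omega⟩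
    set b : Fin N := ⟨j + 1, hj⟩
    have hab : (a : ℕ) + 1 = b := rfl
    have hlt : a < b := Fin.lt_def.mpr (by omega)
  · rcases lt_or_gt_of_ne (v⁻¹.injective.ne hlt.ne) with h | h
    · exact ⟨a, b, hlt, h, rfl⟩
    · have := len_swap_mul_of_gt hab h
      omega
  · rcases lt_or_gt_of_ne (v.injective.ne hlt.ne) with h | h
    · exact ⟨v a, v b, h, by simpa using hlt, mul_swap_eq_swap_mul v a b⟩
    · have := len_mul_swap_of_gt hab h
      omega

lemma bcov_swap_mul {v : Perm (Fin N)} {a b : Fin N} (hab : (a : ℕ) + 1 = b)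
    (h : v⁻¹ a < v⁻¹ b) : bcov N v (swap a b * v) :=
  ⟨⟨a, hab ▸ b.isLt, Or.inl (by rw [swap_eq_sgen hab])⟩, len_swap_mul hab h⟩

lemma pathLE_ones_of_bcov {v w : Perm (Fin N)} (h : bcov N v w) :
    PathLE (ones K v) (ones K w) := by
  obtain ⟨a, b, hab, hv, rfl⟩ := bcov_exists_swap h
  rw [ones_mul]
  refine pathLE_swap_smul hab fun hb => ?_
  rw [mem_ones] at hb ⊢
  exact lt_trans hv hb

lemma pathLE_ones_of_bruhatLE {v w : Perm (Fin N)} (h : bruhatLE N v w) :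
    PathLE (ones K v) (ones K w) := by
  induction h with
  | refl => exact fun _ => le_rfl
  | tail _ hc ih => exact fun n => (pathLE_ones_of_bcov hc n).trans (ih n)

lemma exists_bruhatLE_of_pathLE {v : Perm (Fin N)} {T : Finset (Fin N)}
    (hcard : #T = #(baseSet N K)) (h : PathLE (ones K v) T) :
    ∃ w, ones K w = T ∧ bruhatLE N v w ∧
      (len w : ℤ) + countSum T = len v + countSum (ones K v) := by
  by_cases hT : ones K v = T
  · exact ⟨v, hT, .refl, by rw [hT]⟩
  obtain ⟨n, hn⟩ := exists_countLT_lt h hT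
  obtain ⟨b₀, hb₀, hlt₀⟩ := exists_notMem_countLT_lt ((card_ones v).trans hcard.symm) hn
  obtain ⟨a, b, hab, ha, hb, hlt⟩ := exists_valley hb₀ hlt₀
  have hcov : bcov N v (swap a b * v) :=
    bcov_swap_mul hab (by rw [mem_ones] at ha hb; rw [Fin.lt_def]; omega)
  have hsum := countSum_swap_smul hab ha hb
  have h' : PathLE (ones K (swap a b * v)) T := by
    intro m
    have e := countLT_swap_smul ha hb (Fin.lt_def.mpr (by omega)) m
    rw [ones_mul]
    rcases eq_or_ne m b with rfl | hm
    · rw [if_pos (by omega)] at e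
      omega
    · rw [if_neg (by omega)] at e
      have := h m
      omega
  -- keeps the termination measure below nonnegative
  have hle := countSum_le_of_pathLE h'
  obtain ⟨w, hw, hvw, hlen⟩ := exists_bruhatLE_of_pathLE hcard h'
  rw [ones_mul, hsum, hcov.2] at hlen
  push_cast at hlen
  exact ⟨w, hw, .head hcov hvw, by linarith⟩
termination_by (countSum (ones K v) - countSum T).toNat
decreasing_by rw [ones_mul, hsum] at hle ⊢; omega

lemma pathLE_baseSet {T : Finset (Fin N)} (hcard : #T = #(baseSet N K)) :
    PathLE (baseSet N K) T := by
  intro n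
  rcases le_or_gt n K with hn | hn
  · have hfilter : (baseSet N K).filter (fun i : Fin N => (i : ℕ) < n) =
        univ.filter fun i : Fin N => (i : ℕ) < n := by
      ext i
      simp only [mem_filter, mem_baseSet, mem_univ, true_and]
      omega
    rw [countLT, countLT, hfilter]
    exact card_le_card (filter_subset_filter _ (subset_univ T))
  · unfold countLT
    rw [filter_true_of_mem fun i hi => (mem_baseSet.mp hi).trans hn, ← hcard]
    exact card_filter_le _ _

lemma countSum_baseSet_sub_le_len (v : Perm (Fin N)) :
    countSum (baseSet N K) - countSum (ones K v) ≤ len v := by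
  induction hlen : len v using Nat.strong_induction_on generalizing v with
  | _ n ih =>
  by_cases h1 : v = 1
  · rw [h1, ones_one]
    omega
  obtain ⟨a, b, hab, hdesc⟩ := exists_descent (inv_ne_one.mpr h1)
  have hv : v = swap a b * (swap a b * v) := by rw [← mul_assoc, swap_mul_self, one_mul]
  have hlen' := len_swap_mul_of_gt hab hdesc
  have hstep := countSum_le_swap_smul (ones K (swap a b * v)) hab
  rw [← ones_mul, ← hv] at hstep
  have := ih _ (by omega) (swap a b * v) rfl
  omega

lemma clen_mk (v : Perm (Fin N)) :
    (clen N K (QuotientGroup.mk v) : ℤ) = countSum (baseSet N K) - countSum (ones K v) := by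
  obtain ⟨w, hw, -, hlen⟩ := exists_bruhatLE_of_pathLE (v := 1) (card_ones v)
    (ones_one (K := K) ▸ pathLE_baseSet (card_ones v))
  rw [len_one, ones_one] at hlen
  have hleast : IsLeast {n | ∃ u : Perm (Fin N),
      (QuotientGroup.mk u : Perm (Fin N) ⧸ young N K) = QuotientGroup.mk v ∧ len u = n}
      (len w) := by
    refine ⟨⟨w, mk_eq_mk_iff.mpr hw, rfl⟩, ?_⟩
    rintro _ ⟨u, hu, rfl⟩
    have := countSum_baseSet_sub_le_len (K := K) u
    rw [mk_eq_mk_iff.mp hu] at this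
    omega
  rw [clen, hleast.csInf_eq]
  omega

lemma base_inv_eq_decide_mem_ones (v : Perm (Fin N)) :
    (fun i => base N K (v⁻¹ i)) = fun i => decide (i ∈ ones K v) := by
  ext i
  simp [base, mem_ones]

lemma base_eq_decide_mem_baseSet : base N K = fun i => decide (i ∈ baseSet N K) := by
  ext i
  simp [base, mem_baseSet]

lemma hgtm_decide_mem (T : Finset (Fin N)) (x : ℤ) :
    hgtm (fun i => decide (i ∈ T)) x =
      #(univ.filter fun i : Fin N => (i : ℤ) < x) - 2 * (countLT T x.toNat : ℤ) := by
  have hfilter : T.filter (fun i : Fin N => (i : ℕ) < x.toNat) =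
      (univ.filter fun i : Fin N => (i : ℤ) < x).filter (· ∈ T) := by
    ext i
    simp only [mem_filter, mem_univ, true_and, and_comm (a := i ∈ T)]
    exact and_congr_left fun _ => by omega
  have hsign : ∀ i, (if decide (i ∈ T) then (-1 : ℤ) else 1) =
      1 - 2 * if i ∈ T then 1 else 0 := by
    intro i
    by_cases h : i ∈ T <;> simp [h]
  simp only [hgtm, countLT, hfilter, hsign, sum_sub_distrib, ← mul_sum, sum_boole, sum_const,
    nsmul_one]

lemma pathLE_iff_hgtm_le {T T' : Finset (Fin N)} :
    PathLE T T' ↔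
      ∀ x : ℤ, hgtm (fun i => decide (i ∈ T)) x ≤ hgtm (fun i => decide (i ∈ T')) x := by
  simp only [hgtm_decide_mem]
  refine ⟨fun h x => ?_, fun h n => ?_⟩
  · have := h x.toNat
    omega
  · have := h n
    simp only [Int.toNat_natCast] at this
    omega

end BruhatCoset

open BruhatCoset

theorem stmt5_general (N K : ℕ) (v w : Equiv.Perm (Fin N)) :
    (cosetLE N K (QuotientGroup.mk v) (QuotientGroup.mk w) ↔
      ∀ x : ℤ, hgtm (fun i => base N K (v⁻¹ i)) x ≤ hgtm (fun i => base N K (w⁻¹ i)) x) ∧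
    2 * (clen N K (QuotientGroup.mk v) : ℤ) =
      ∑ x ∈ Finset.range (N + 1),
        (hgtm (fun i => base N K (v⁻¹ i)) (x : ℤ) - hgtm (base N K) (x : ℤ)) := by
  rw [base_inv_eq_decide_mem_ones v, base_inv_eq_decide_mem_ones w,
    base_eq_decide_mem_baseSet, ← pathLE_iff_hgtm_le]
  refine ⟨⟨?_, fun h => ?_⟩, ?_⟩
  · rintro ⟨v', w', hv, hw, hvw⟩
    rw [mk_eq_mk_iff] at hv hw
    exact hv ▸ hw ▸ pathLE_ones_of_bruhatLE hvw
  · obtain ⟨w', hw', hvw, -⟩ := exists_bruhatLE_of_pathLE (card_ones w) h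
    exact ⟨v, w', rfl, mk_eq_mk_iff.mpr hw', hvw⟩
  · simp only [clen_mk, countSum, hgtm_decide_mem, Int.toNat_natCast]
    rw [mul_sub, mul_sum, mul_sum, ← sum_sub_distrib]
    exact sum_congr rfl fun n _ => by ring

/-- for cosets `x = mk v`, `y = mk w` of `S_K × S_{N-K}` with associated
paths (ε = − convention) `α`, `β`, one has `x ≤ y` in the induced Bruhat order iff `α`
lies weakly below `β`; moreover twice the coset length `|x|` equals the total height
difference between `α` and the minimal path (i.e. `|x|` is the number of unit boxes
between `α` and the minimal path, which is the path of the string `(1,…,1,2,…,2)`). -/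
theorem stmt5 (N K : ℕ) (hK : K ≤ N) (v w : Equiv.Perm (Fin N)) :
    (cosetLE N K (QuotientGroup.mk v) (QuotientGroup.mk w) ↔
      ∀ x : ℤ, hgtm (fun i => base N K (v⁻¹ i)) x ≤ hgtm (fun i => base N K (w⁻¹ i)) x) ∧
    2 * (clen N K (QuotientGroup.mk v) : ℤ) =
      ∑ x ∈ Finset.range (N + 1),
        (hgtm (fun i => base N K (v⁻¹ i)) (x : ℤ) - hgtm (base N K) (x : ℤ)) :=
  stmt5_general N K v w
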